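/- There exists a constant C > 0 such that for every η ≥ 1, | ∫_ℝ ω'(x − η) (1 − ω(x))³ dx − 8 e^{−√2 η} | ≤ C e^{−2√2 η}, where ω(x) = tanh(x/√2). -/

import Mathlib

open Real MeasureTheory

/-- The Allen–Cahn heteroclinic `ω(x) = tanh (x/√2)`. -/
noncomputable def ω (x : ℝ) : ℝ := Real.tanh (x / Real.sqrt 2)

/-!
With `u = e^{√2 x}` one has `1 - ω = 2 / (u + 1)`, so `ω' = (1 - ω²)/√2 = 2√2 u / (u + 1)²` differs
from `2√2 u` by at most `4√2 u²`. At `x - η` this replaces the integrand by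
`2√2 e^{-√2 η} e^{√2 x} (1 - ω x)³`, with an error at most `4√2 e^{-2√2 η} e^{2√2 x} (1 - ω x)³`.
Both `∫ e^{√2 x} (1 - ω)³` and `∫ e^{2√2 x} (1 - ω)³` equal `2√2`: the identity
`e^{√2 x} (1 - ω) = 1 + ω` turns their integrands into `√2 ω' (1 - ω)` and `√2 ω' (1 + ω)`, which
are exact derivatives.
-/

open Filter Topology

theorem MeasureTheory.integrable_and_integral_eq_of_hasDerivAt_of_nonneg {F f : ℝ → ℝ} {A B : ℝ}
    (hderiv : ∀ x, HasDerivAt F (f x) x) (hpos : ∀ x, 0 ≤ f x)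
    (hbot : Tendsto F atBot (𝓝 A)) (htop : Tendsto F atTop (𝓝 B)) :
    Integrable f ∧ ∫ x, f x = B - A := by
  have hint : ∀ a b, IntervalIntegrable f volume a b := fun a b =>
    intervalIntegral.intervalIntegrable_deriv_of_nonneg
      (fun x _ => (hderiv x).continuousAt.continuousWithinAt) (fun x _ => hderiv x)
      (fun x _ => hpos x)
  have hnorm_integral : ∀ i : ℝ, ∫ x in -i..i, ‖f x‖ = F i - F (-i) := fun i => by
    simp_rw [Real.norm_of_nonneg (hpos _)]
    exact intervalIntegral.integral_eq_sub_of_hasDerivAt (fun x _ => hderiv x) (hint _ _)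
  have hf : Integrable f := by
    refine integrable_of_intervalIntegral_norm_tendsto (l := atTop) (a := Neg.neg) (b := id)
      (B - A) (fun i => (hint _ _).1) tendsto_neg_atTop_atBot tendsto_id ?_
    simp only [id, hnorm_integral]
    exact htop.sub (hbot.comp tendsto_neg_atTop_atBot)
  exact ⟨hf, integral_of_hasDerivAt_of_tendsto hderiv hf hbot htop⟩

theorem Real.hasDerivAt_tanh (x : ℝ) : HasDerivAt tanh (1 - tanh x ^ 2) x := by
  have h : HasDerivAt (fun y => sinh y / cosh y) _ x :=
    (hasDerivAt_sinh x).div (hasDerivAt_cosh x) (cosh_pos x).ne'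
  rw [show tanh = fun y => sinh y / cosh y from funext tanh_eq_sinh_div_cosh]
  refine h.congr_deriv ?_
  beta_reduce
  field_simp

theorem Real.tanh_eq_one_sub (x : ℝ) : tanh x = 1 - 2 / (exp (2 * x) + 1) := by
  rw [tanh_eq_sinh_div_cosh, sinh_eq, cosh_eq, two_mul, exp_add, exp_neg]
  field_simp
  ring

theorem Real.tendsto_tanh_atTop : Tendsto tanh atTop (𝓝 1) := by
  have h : Tendsto (fun x => exp (2 * x) + 1) atTop atTop :=
    tendsto_atTop_add_const_right _ 1 (tendsto_exp_atTop.comp (tendsto_id.const_mul_atTop two_pos))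
  simpa [funext tanh_eq_one_sub] using (h.const_div_atTop 2).const_sub 1

theorem Real.tendsto_tanh_atBot : Tendsto tanh atBot (𝓝 (-1)) := by
  have h : Tendsto (fun x => exp (2 * x) + 1) atBot (𝓝 1) := by
    simpa using (tendsto_exp_atBot.comp (tendsto_id.const_mul_atBot two_pos)).add_const 1
  rw [funext tanh_eq_one_sub]
  convert (tendsto_const_nhds.div h one_ne_zero (a := (2:ℝ))).const_sub 1 using 2 <;> norm_num

theorem MeasureTheory.abs_integral_sub_integral_le {α : Type*} [MeasurableSpace α] {μ : Measure α}
    {f g h : α → ℝ} (hf : AEStronglyMeasurable f μ) (hg : Integrable g μ) (hh : Integrable h μ)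
    (hle : ∀ᵐ x ∂μ, |f x - g x| ≤ h x) : |∫ x, f x ∂μ - ∫ x, g x ∂μ| ≤ ∫ x, h x ∂μ := by
  have hfg : Integrable (fun x => f x - g x) μ := hh.mono' (hf.sub hg.1) hle
  have hf' : Integrable f μ := (hfg.add hg).congr (.of_forall fun x => sub_add_cancel (f x) (g x))
  rw [← integral_sub hf' hg]
  exact (abs_integral_le_integral_abs).trans (integral_mono_ae hfg.abs hh hle)

theorem ω_eq_one_sub (x : ℝ) : ω x = 1 - 2 / (exp (√2 * x) + 1) := by
  have h : 2 * (x / √2) = √2 * x := by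
    field_simp
    rw [sq_sqrt zero_le_two, mul_comm]
  rw [ω, tanh_eq_one_sub, h]

theorem exp_mul_one_sub_ω (x : ℝ) : exp (√2 * x) * (1 - ω x) = 1 + ω x := by
  rw [ω_eq_one_sub]
  field_simp
  ring

theorem hasDerivAt_ω (x : ℝ) : HasDerivAt ω ((1 - ω x ^ 2) / √2) x := by
  have h : HasDerivAt (fun y => tanh (y / √2)) ((1 - tanh (x / √2) ^ 2) * (1 / √2)) x :=
    (hasDerivAt_tanh _).comp x ((hasDerivAt_id x).div_const √2)
  exact h.congr_deriv (by rw [ω]; ring)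

theorem deriv_ω : deriv ω = fun x => (1 - ω x ^ 2) / √2 :=
  funext fun x => (hasDerivAt_ω x).deriv

@[fun_prop]
theorem continuous_ω : Continuous ω :=
  continuous_iff_continuousAt.2 fun x => (hasDerivAt_ω x).continuousAt

theorem tendsto_ω_atTop : Tendsto ω atTop (𝓝 1) :=
  tendsto_tanh_atTop.comp (tendsto_id.atTop_div_const (by positivity))

theorem tendsto_ω_atBot : Tendsto ω atBot (𝓝 (-1)) :=
  tendsto_tanh_atBot.comp (tendsto_id.atBot_div_const (by positivity))

theorem ω_lt_one (x : ℝ) : ω x < 1 := tanh_lt_one _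

theorem abs_deriv_ω_sub_le (x : ℝ) :
    |deriv ω x - 2 * √2 * exp (√2 * x)| ≤ 4 * √2 * exp (√2 * x) ^ 2 := by
  have hω' : deriv ω x = 2 * √2 * exp (√2 * x) / (exp (√2 * x) + 1) ^ 2 := by
    rw [deriv_ω]
    dsimp only
    rw [ω_eq_one_sub]
    field_simp
    rw [sq_sqrt zero_le_two]
    ring
  rw [hω']
  set u := exp (√2 * x)
  have hu : 0 < u := exp_pos _
  have hdiff :
      2 * √2 * u - 2 * √2 * u / (u + 1) ^ 2 = 2 * √2 * u ^ 2 * ((u + 2) / (u + 1) ^ 2) := by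
    field_simp
    ring
  have hfrac : (u + 2) / (u + 1) ^ 2 ≤ 2 := by
    rw [div_le_iff₀ (by positivity)]
    nlinarith
  rw [abs_sub_comm, hdiff, abs_of_nonneg (by positivity)]
  calc 2 * √2 * u ^ 2 * ((u + 2) / (u + 1) ^ 2) ≤ 2 * √2 * u ^ 2 * 2 := by gcongr
    _ = 4 * √2 * u ^ 2 := by ring

theorem hasDerivAt_one_sub_ω_sq (x : ℝ) :
    HasDerivAt (fun y => -(1 - ω y) ^ 2 / √2) (exp (√2 * x) * (1 - ω x) ^ 3) x := by
  refine ((((hasDerivAt_ω x).const_sub 1).pow 2).neg.div_const √2).congr_deriv ?_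
  have h2 : √2 ^ 2 = 2 := sq_sqrt zero_le_two
  have he := exp_mul_one_sub_ω x
  field_simp
  rw [h2]
  linear_combination (-2 * (1 - ω x) ^ 2) * he

theorem hasDerivAt_one_add_ω_sq (x : ℝ) :
    HasDerivAt (fun y => (1 + ω y) ^ 2 / √2) (exp (√2 * x) ^ 2 * (1 - ω x) ^ 3) x := by
  refine ((((hasDerivAt_ω x).const_add 1).pow 2).div_const √2).congr_deriv ?_
  have h2 : √2 ^ 2 = 2 := sq_sqrt zero_le_two
  have he := exp_mul_one_sub_ω x
  field_simp
  rw [h2]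
  linear_combination (-2 * (1 - ω x) * (exp (√2 * x) * (1 - ω x) + 1 + ω x)) * he

theorem integrable_and_integral_exp_mul_one_sub_ω_pow_three :
    Integrable (fun x => exp (√2 * x) * (1 - ω x) ^ 3) ∧
      ∫ x, exp (√2 * x) * (1 - ω x) ^ 3 = 2 * √2 := by
  have hpos (x : ℝ) : 0 ≤ exp (√2 * x) * (1 - ω x) ^ 3 := by
    have := ω_lt_one x
    positivity
  obtain ⟨hint, hval⟩ := integrable_and_integral_eq_of_hasDerivAt_of_nonneg
    hasDerivAt_one_sub_ω_sq hpos
    (((tendsto_ω_atBot.const_sub 1).pow 2).neg.div_const √2)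
    (((tendsto_ω_atTop.const_sub 1).pow 2).neg.div_const √2)
  refine ⟨hint, hval.trans ?_⟩
  field_simp
  rw [sq_sqrt zero_le_two]
  norm_num

theorem integrable_and_integral_exp_sq_mul_one_sub_ω_pow_three :
    Integrable (fun x => exp (√2 * x) ^ 2 * (1 - ω x) ^ 3) ∧
      ∫ x, exp (√2 * x) ^ 2 * (1 - ω x) ^ 3 = 2 * √2 := by
  have hpos (x : ℝ) : 0 ≤ exp (√2 * x) ^ 2 * (1 - ω x) ^ 3 := by
    have := ω_lt_one x
    positivity
  obtain ⟨hint, hval⟩ := integrable_and_integral_eq_of_hasDerivAt_of_nonneg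
    hasDerivAt_one_add_ω_sq hpos
    (((tendsto_ω_atBot.const_add 1).pow 2).div_const √2)
    (((tendsto_ω_atTop.const_add 1).pow 2).div_const √2)
  refine ⟨hint, hval.trans ?_⟩
  field_simp
  rw [sq_sqrt zero_le_two]
  norm_num

theorem abs_interaction_integrand_sub_le (η x : ℝ) :
    |deriv ω (x - η) * (1 - ω x) ^ 3 - 2 * √2 * exp (-√2 * η) * (exp (√2 * x) * (1 - ω x) ^ 3)|
      ≤ 4 * √2 * exp (-√2 * η) ^ 2 * (exp (√2 * x) ^ 2 * (1 - ω x) ^ 3) := by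
  have hshift : exp (√2 * (x - η)) = exp (-√2 * η) * exp (√2 * x) := by
    rw [← exp_add]
    ring_nf
  have hcube : 0 ≤ (1 - ω x) ^ 3 := by
    have := ω_lt_one x
    positivity
  have hfactor : deriv ω (x - η) * (1 - ω x) ^ 3
      - 2 * √2 * exp (-√2 * η) * (exp (√2 * x) * (1 - ω x) ^ 3)
      = (deriv ω (x - η) - 2 * √2 * exp (√2 * (x - η))) * (1 - ω x) ^ 3 := by
    rw [hshift]
    ring
  rw [hfactor, abs_mul, abs_of_nonneg hcube]
  calc _ ≤ 4 * √2 * exp (√2 * (x - η)) ^ 2 * (1 - ω x) ^ 3 :=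
        mul_le_mul_of_nonneg_right (abs_deriv_ω_sub_le _) hcube
    _ = _ := by
        rw [hshift]
        ring

/-- The interaction integral `∫ ω'(x−η)(1−ω(x))³ dx = 8e^{−√2 η} + O(e^{−2√2 η})`. -/
theorem interaction_integral : ∃ C : ℝ, 0 < C ∧
    ∀ η : ℝ, 1 ≤ η →
      |(∫ x : ℝ, deriv ω (x - η) * (1 - ω x) ^ 3) - 8 * Real.exp (-(Real.sqrt 2) * η)|
        ≤ C * Real.exp (-(2 * Real.sqrt 2) * η) := by
  refine ⟨16, by norm_num, fun η _ => ?_⟩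
  obtain ⟨hint₁, hval₁⟩ := integrable_and_integral_exp_mul_one_sub_ω_pow_three
  obtain ⟨hint₂, hval₂⟩ := integrable_and_integral_exp_sq_mul_one_sub_ω_pow_three
  have hmeas : AEStronglyMeasurable (fun x => deriv ω (x - η) * (1 - ω x) ^ 3) := by
    rw [deriv_ω]
    fun_prop
  have key := abs_integral_sub_integral_le hmeas (hint₁.const_mul (2 * √2 * exp (-√2 * η)))
    (hint₂.const_mul (4 * √2 * exp (-√2 * η) ^ 2)) (.of_forall (abs_interaction_integrand_sub_le η))
  rw [integral_const_mul, integral_const_mul, hval₁, hval₂] at key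
  have h2 : √2 * √2 = 2 := mul_self_sqrt zero_le_two
  have hsq : exp (-(2 * √2) * η) = exp (-√2 * η) ^ 2 := by
    rw [← exp_nat_mul]
    ring_nf
  calc _ = |(∫ x, deriv ω (x - η) * (1 - ω x) ^ 3) - 2 * √2 * exp (-√2 * η) * (2 * √2)| := by
        congr 2
        linear_combination (-4 * exp (-√2 * η)) * h2
    _ ≤ 4 * √2 * exp (-√2 * η) ^ 2 * (2 * √2) := key
    _ = _ := by
        rw [hsq]
        linear_combination (8 * exp (-√2 * η) ^ 2) * h2
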